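/- arXiv:2109.06394 — 2 statements merged into one kernel-verified Lean document; each statement's English description precedes it below -/
import Mathlib

section
/- Let k be a field of characteristic zero. The n-th symmetric power Vₙ = Symⁿ(k²) of the standard representation of SL₂(k) is an irreducible representation. -/
/- STATEMENT 5: Let k be a field of characteristic zero.  The n-th symmetric
power Vₙ = Symⁿ(k²), modelled as the space of homogeneous binary forms of
degree n with SL₂(k) acting by linear substitution, is irreducible: any
SL₂(k)-stable subspace is 0 or everything. -/

open MvPolynomial

noncomputable section

/-- The linear substitution action of a 2×2 matrix on binary forms:
`X i ↦ ∑ j, A j i • X j`. -/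
def substAct {k : Type*} [CommRing k] (A : Matrix (Fin 2) (Fin 2) k) :
    MvPolynomial (Fin 2) k →ₐ[k] MvPolynomial (Fin 2) k :=
  aeval fun i => ∑ j, A j i • X j

end

open Matrix in
lemma extraction {k V : Type*} [Field k] [AddCommGroup V] [Module k V]
    (W : Submodule k V) {m : ℕ} (v : Fin m → V) (u : Fin m → k)
    (hu : Function.Injective u)
    (h : ∀ i, ∑ j : Fin m, u i ^ j.val • v j ∈ W) : ∀ j, v j ∈ W := by
  intro j
  set M := Matrix.vandermonde u with hM
  have hdet : M.det ≠ 0 := by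
    rw [Matrix.det_vandermonde]
    refine Finset.prod_ne_zero_iff.2 fun i _ => Finset.prod_ne_zero_iff.2 fun l hl => ?_
    have hil : l ≠ i := by
      simp [Finset.mem_Ioi] at hl
      exact fun e => by omega
    exact sub_ne_zero.2 fun e => hil (hu e)
  have hinv : M⁻¹ * M = 1 := Matrix.nonsing_inv_mul M (isUnit_iff_ne_zero.2 hdet)
  have key : v j = ∑ i, M⁻¹ j i • ∑ l, M i l • v l := by
    simp_rw [Finset.smul_sum, smul_smul]
    rw [Finset.sum_comm]
    have : ∀ l, ∑ i, (M⁻¹ j i * M i l) • v l = ((M⁻¹ * M) j l) • v l := by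
      intro l; rw [← Finset.sum_smul, Matrix.mul_apply]
    simp_rw [this, hinv, Matrix.one_apply]
    simp
  rw [key]
  exact Submodule.sum_mem _ fun i _ => Submodule.smul_mem _ _ (by simpa [hM, Matrix.vandermonde] using h i)


noncomputable section

def D (a b : ℕ) : Fin 2 →₀ ℕ := Finsupp.single 0 a + Finsupp.single 1 b

variable {k : Type*} [Field k]

lemma monomial_D (a b : ℕ) (c : k) :
    (monomial (D a b) c : MvPolynomial (Fin 2) k) = c • (X 0 ^ a * X 1 ^ b) := by
  rw [X_pow_eq_monomial, X_pow_eq_monomial, MvPolynomial.monomial_mul, smul_monomial, D,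
    mul_one, smul_eq_mul, mul_one]

lemma substAct_X0 (A : Matrix (Fin 2) (Fin 2) k) :
    substAct A (X 0) = A 0 0 • X 0 + A 1 0 • X 1 := by
  simp [substAct, Fin.sum_univ_two]

lemma substAct_X1 (A : Matrix (Fin 2) (Fin 2) k) :
    substAct A (X 1) = A 0 1 • X 0 + A 1 1 • X 1 := by
  simp [substAct, Fin.sum_univ_two]

lemma D_degree (a b : ℕ) : ∑ i ∈ (D a b).support, (D a b) i = a + b := by
  have : ∑ i ∈ (D a b).support, (D a b) i = ∑ i : Fin 2, (D a b) i :=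
    Finset.sum_subset (Finset.subset_univ _) (by simp [Finsupp.notMem_support_iff])
  rw [this, Fin.sum_univ_two]
  simp [D, Finsupp.single_apply]

lemma isHomogeneous_monomial_D (a b c : k) : True := trivial

end

section
variable {k : Type*} [Field k]

lemma substAct_torus (t : k) (a b : ℕ) (c : k) :
    substAct (Matrix.of ![![t,0],![0,t⁻¹]]) (monomial (D a b) c)
      = (t ^ a * t⁻¹ ^ b) • monomial (D a b) c := by
  rw [monomial_D, map_smul, map_mul, map_pow, map_pow, substAct_X0, substAct_X1]
  simp only [Matrix.of_apply, Matrix.cons_val', Matrix.cons_val_zero, Matrix.cons_val_one,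
    Matrix.head_cons, Matrix.empty_val', Matrix.cons_val_fin_one, Matrix.head_fin_const]
  simp only [smul_eq_C_mul, map_mul, map_pow, zero_smul, add_zero, zero_add]
  ring

lemma substAct_upper (c : k) (a b : ℕ) (e : k) :
    substAct (Matrix.of ![![1,c],![0,1]]) (monomial (D a b) e)
      = ∑ j ∈ Finset.range (b+1), c ^ j • monomial (D (a+j) (b-j)) (e * b.choose j) := by
  rw [monomial_D, map_smul, map_mul, map_pow, map_pow, substAct_X0, substAct_X1]
  simp only [Matrix.of_apply, Matrix.cons_val', Matrix.cons_val_zero, Matrix.cons_val_one,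
    Matrix.head_cons, Matrix.empty_val', Matrix.cons_val_fin_one, Matrix.head_fin_const]
  simp only [one_smul, zero_smul, add_zero, zero_add]
  rw [add_pow, Finset.mul_sum, Finset.smul_sum]
  refine Finset.sum_congr rfl fun j hj => ?_
  rw [monomial_D]
  simp only [smul_eq_C_mul, map_mul, map_pow, MvPolynomial.C_eq_coe_nat]
  push_cast
  ring

lemma substAct_lower (c : k) (a b : ℕ) (e : k) :
    substAct (Matrix.of ![![1,0],![c,1]]) (monomial (D a b) e)
      = ∑ j ∈ Finset.range (a+1), c ^ j • monomial (D (a-j) (b+j)) (e * a.choose j) := by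
  rw [monomial_D, map_smul, map_mul, map_pow, map_pow, substAct_X0, substAct_X1]
  simp only [Matrix.of_apply, Matrix.cons_val', Matrix.cons_val_zero, Matrix.cons_val_one,
    Matrix.head_cons, Matrix.empty_val', Matrix.cons_val_fin_one, Matrix.head_fin_const]
  simp only [one_smul, zero_smul, add_zero, zero_add]
  rw [add_comm (X 0) (c • X 1), add_pow]
  rw [Finset.sum_mul, Finset.smul_sum]
  refine Finset.sum_congr rfl fun j hj => ?_
  rw [monomial_D]
  simp only [smul_eq_C_mul, map_mul, map_pow, MvPolynomial.C_eq_coe_nat]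
  push_cast
  ring
end

section
variable {k : Type*} [Field k]

lemma deg2 (σ : Fin 2 →₀ ℕ) : σ.degree = σ 0 + σ 1 := by
  show ∑ i ∈ σ.support, σ i = σ 0 + σ 1
  have : ∑ i ∈ σ.support, σ i = ∑ i : Fin 2, σ i :=
    Finset.sum_subset (Finset.subset_univ _) (by simp [Finsupp.notMem_support_iff])
  rw [this, Fin.sum_univ_two]

lemma D_apply0 (a b : ℕ) : (D a b) 0 = a := by simp [D, Finsupp.single_apply]
lemma D_apply1 (a b : ℕ) : (D a b) 1 = b := by simp [D, Finsupp.single_apply]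

lemma homog_decomp {n : ℕ} (f : MvPolynomial (Fin 2) k)
    (hf : f.IsHomogeneous n) :
    f = ∑ a ∈ Finset.range (n+1), monomial (D a (n-a)) (coeff (D a (n-a)) f) := by
  apply MvPolynomial.ext
  intro σ
  rw [MvPolynomial.coeff_sum]
  simp only [MvPolynomial.coeff_monomial]
  by_cases hσ : σ 0 + σ 1 = n
  · have hσD : σ = D (σ 0) (n - σ 0) := by
      ext i
      fin_cases i
      · show σ 0 = (D (σ 0) (n - σ 0)) 0; rw [D_apply0]
      · show σ 1 = (D (σ 0) (n - σ 0)) 1; rw [D_apply1]; omega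
    rw [Finset.sum_eq_single (σ 0)]
    · rw [← hσD]; simp
    · intro a ha hne
      rw [if_neg]
      intro he
      exact hne (by rw [← D_apply0 a (n-a), he])
    · intro h
      exact absurd (Finset.mem_range.2 (by omega)) h
  · have h0 : coeff σ f = 0 := hf.coeff_eq_zero (by rw [deg2]; exact hσ)
    rw [h0, Finset.sum_eq_zero]
    intro a ha
    rw [if_neg]
    intro he
    apply hσ
    have := Finset.mem_range.1 ha
    rw [← he, D_apply0, D_apply1]
    omega
end

section
variable {k : Type*} [Field k] [CharZero k]

lemma extraction_nat {V : Type*} [AddCommGroup V] [Module k V]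
    (W : Submodule k V) {m : ℕ} (w : Fin m → V)
    (h : ∀ c : k, ∑ j : Fin m, c ^ j.val • w j ∈ W) : ∀ j, w j ∈ W := by
  refine extraction W w (fun i => ((i : ℕ) : k)) ?_ (fun i => h _)
  intro i j hij
  exact Fin.val_injective (Nat.cast_injective hij)

lemma upper_det (c : k) : (Matrix.of ![![1,c],![0,1]]).det = 1 := by
  simp [Matrix.det_fin_two]

lemma lower_det (c : k) : (Matrix.of ![![1,0],![c,1]]).det = 1 := by
  simp [Matrix.det_fin_two]

lemma torus_det (t : k) (ht : t ≠ 0) : (Matrix.of ![![t,0],![0,t⁻¹]]).det = 1 := by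
  simp [Matrix.det_fin_two, mul_inv_cancel₀ ht]
end

section
variable {k : Type*} [Field k]

lemma pow_coef {t : k} (ht : t ≠ 0) {a n : ℕ} (h : a ≤ n) :
    t ^ n * (t ^ a * t⁻¹ ^ (n - a)) = (t ^ 2) ^ a := by
  have hn : t ^ n = t ^ (n - a) * t ^ a := by rw [← pow_add]; congr 1; omega
  rw [inv_pow, hn, ← pow_mul, mul_comm 2 a, pow_mul]
  field_simp
end



theorem stmt5 (k : Type*) [Field k] [CharZero k] (n : ℕ)
    (W : Submodule k (MvPolynomial (Fin 2) k))
    (hWV : W ≤ homogeneousSubmodule (Fin 2) k n)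
    (hstab : ∀ A : Matrix (Fin 2) (Fin 2) k, A.det = 1 →
      ∀ f ∈ W, substAct A f ∈ W) :
    W = ⊥ ∨ W = homogeneousSubmodule (Fin 2) k n := by
  by_cases hW : W = ⊥
  · exact Or.inl hW
  right
  obtain ⟨f, hfW, hf0⟩ := Submodule.exists_mem_ne_zero_of_ne_bot hW
  have hfh : f.IsHomogeneous n := (mem_homogeneousSubmodule _ _).1 (hWV hfW)
  -- Step A: each monomial component of f lies in W
  have stepA : ∀ a : Fin (n+1),
      monomial (D a.val (n - a.val)) (coeff (D a.val (n - a.val)) f) ∈ W := by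
    refine extraction W _ (fun i => ((((i : ℕ)+1)^2 : ℕ) : k)) ?_ ?_
    · intro i j hij
      have h1 : ((i:ℕ)+1)^2 = ((j:ℕ)+1)^2 := Nat.cast_injective hij
      have h2 := Nat.pow_left_injective (by norm_num) h1
      exact Fin.val_injective (by omega)
    · intro i
      set t : k := (((i : ℕ) + 1 : ℕ) : k) with hts
      have ht : t ≠ 0 := Nat.cast_ne_zero.2 (by omega)
      have h1 : substAct (Matrix.of ![![t,0],![0,t⁻¹]]) f ∈ W :=
        hstab _ (torus_det t ht) f hfW
      have h2 : t ^ n • substAct (Matrix.of ![![t,0],![0,t⁻¹]]) f ∈ W :=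
        Submodule.smul_mem _ _ h1
      have heq : t ^ n • substAct (Matrix.of ![![t,0],![0,t⁻¹]]) f
          = ∑ j : Fin (n+1), ((((i : ℕ)+1)^2 : ℕ) : k) ^ j.val •
              monomial (D j.val (n - j.val)) (coeff (D j.val (n - j.val)) f) := by
        conv_lhs => rw [homog_decomp f hfh, map_sum]
        rw [Finset.smul_sum, ← Finset.sum_range
          (fun a => ((((i : ℕ)+1)^2 : ℕ) : k) ^ a •
            monomial (D a (n - a)) (coeff (D a (n - a)) f))]
        have hnode : ((((i : ℕ)+1)^2 : ℕ) : k) = t ^ 2 := by rw [hts]; push_cast; ring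
        refine Finset.sum_congr rfl fun a ha => ?_
        rw [substAct_torus, smul_smul, pow_coef ht (Nat.lt_succ_iff.1 (Finset.mem_range.1 ha)),
          hnode]
      rw [heq] at h2
      exact h2
  -- get one nonzero monomial in W
  have hex : ∃ a : Fin (n+1), coeff (D a.val (n - a.val)) f ≠ 0 := by
    by_contra hc
    push_neg at hc
    apply hf0
    rw [homog_decomp f hfh]
    refine Finset.sum_eq_zero fun a ha => ?_
    rw [show coeff (D a (n - a)) f = 0 from hc ⟨a, Finset.mem_range.1 ha⟩, map_zero]
  obtain ⟨a, hca⟩ := hex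
  have hmono : (monomial (D a.val (n - a.val)) (1 : k)) ∈ W := by
    have := Submodule.smul_mem W (coeff (D a.val (n - a.val)) f)⁻¹ (stepA a)
    rwa [smul_monomial, smul_eq_mul, inv_mul_cancel₀ hca] at this
  -- Step B: the monomial X0^n lies in W
  set b := n - a.val with hb
  have hab : a.val + b = n := by have := a.isLt; omega
  have stepB : (monomial (D n 0) (1 : k)) ∈ W := by
    have hB := extraction_nat W
      (fun j : Fin (b+1) => monomial (D (a.val + j.val) (b - j.val))
        ((1:k) * (b.choose j.val : k)))
      (fun c => by
        have := hstab _ (upper_det c) _ hmono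
        rw [substAct_upper] at this
        rwa [← Finset.sum_range
          (fun j => c ^ j • monomial (D (a.val + j) (b - j)) ((1:k) * (b.choose j : k)))])
    have := hB ⟨b, by omega⟩
    simpa [hab, Nat.sub_self, Nat.choose_self] using this
  -- Step C: all monomials lie in W
  have stepC : ∀ a' : ℕ, a' ≤ n → (monomial (D a' (n - a')) (1 : k)) ∈ W := by
    intro a' ha'
    have hC := extraction_nat W
      (fun j : Fin (n+1) => monomial (D (n - j.val) (0 + j.val))
        ((1:k) * (n.choose j.val : k)))
      (fun c => by
        have := hstab _ (lower_det c) _ stepB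
        rw [substAct_lower] at this
        rwa [← Finset.sum_range
          (fun j => c ^ j • monomial (D (n - j) (0 + j)) ((1:k) * (n.choose j : k)))])
    have hj := hC ⟨n - a', by omega⟩
    have hch : ((n.choose (n - a') : k)) ≠ 0 :=
      Nat.cast_ne_zero.2 (Nat.choose_pos (by omega)).ne'
    have hmem := Submodule.smul_mem W ((n.choose (n - a') : k))⁻¹ hj
    have hrw : n - (n - a') = a' := by omega
    simpa [smul_monomial, smul_eq_mul, inv_mul_cancel₀ hch, hrw] using hmem
  -- conclude
  refine le_antisymm hWV fun g hg => ?_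
  have hgh : g.IsHomogeneous n := (mem_homogeneousSubmodule _ _).1 hg
  rw [homog_decomp g hgh]
  refine Submodule.sum_mem _ fun a' ha' => ?_
  have h1 := Submodule.smul_mem W (coeff (D a' (n - a')) g)
    (stepC a' (by simpa using Nat.lt_succ_iff.1 (Finset.mem_range.1 ha')))
  rwa [smul_monomial, smul_eq_mul, mul_one] at h1
end

section
/- (Resultant form of the Woods Hole formula) For an arbitrary field K and polynomials f, g ∈ K[x] with deg f ≥ 3 and deg f ≥ deg g + 2, the derivative at t = 0 of t ↦ Res_x(f(x), f′(x) + t·g(x)) vanishes: (∂/∂t) Res_x(f(x), f′(x) + t g(x)) |_{t=0} = 0, where the resultant is taken with degree bounds (deg f, deg f − 1). -/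
/- STATEMENT 19 (resultant form of the Woods Hole formula): for an arbitrary
field K and polynomials f, g ∈ K[x] with deg f ≥ 3 and deg f ≥ deg g + 2, the
derivative at t = 0 of t ↦ Res_x(f(x), f′(x) + t·g(x)) vanishes, the resultant
being taken with degree bounds (deg f, deg f − 1).  Here Res_x(f, f′ + t·g) is
an element of K[t], obtained from the Sylvester determinant over K[t]. -/

noncomputable section

/-- The Sylvester matrix of `f` (degree bound `d`) and `g` (degree bound `e`):
`e` rows of coefficients of `f` followed by `d` rows of coefficients of `g`. -/
def sylvester {R : Type*} [CommRing R] (d e : ℕ) (f g : Polynomial R) :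
    Matrix (Fin (e + d)) (Fin (e + d)) R := fun i j =>
  if (i : ℕ) < e then
    (if (i : ℕ) ≤ (j : ℕ) ∧ (j : ℕ) ≤ (i : ℕ) + d then f.coeff ((j : ℕ) - (i : ℕ))
     else 0)
  else
    (if (i : ℕ) - e ≤ (j : ℕ) ∧ (j : ℕ) ≤ (i : ℕ) then
      g.coeff ((j : ℕ) - ((i : ℕ) - e))
     else 0)

/-- The resultant of `f` and `g` with degree bounds `d` and `e`. -/
def res {R : Type*} [CommRing R] (d e : ℕ) (f g : Polynomial R) : R :=
  (sylvester d e f g).det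


end

namespace Stmt19aux

open Polynomial Matrix Finset

variable {R : Type*} [CommRing R]

theorem coeff_X_pow_mul' (p : R[X]) (n d : ℕ) :
    (X ^ n * p).coeff d = if n ≤ d then p.coeff (d - n) else 0 := by
  rw [(commute_X_pow p n).eq, coeff_mul_X_pow']

theorem syl_top {d e : ℕ} (f g : R[X]) (hf : f.natDegree ≤ d) (i j : Fin (e + d))
    (h : (i : ℕ) < e) : sylvester d e f g i j = (X ^ (i : ℕ) * f).coeff (j : ℕ) := by
  rw [_root_.sylvester, if_pos h, coeff_X_pow_mul']
  rcases le_or_gt (i : ℕ) (j : ℕ) with hij | hij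
  · rw [if_pos hij]
    rcases le_or_gt (j : ℕ) ((i : ℕ) + d) with hjd | hjd
    · rw [if_pos ⟨hij, hjd⟩]
    · rw [if_neg (by omega)]
      exact (coeff_eq_zero_of_natDegree_lt (by omega)).symm
  · rw [if_neg (by omega), if_neg (by omega)]

theorem syl_bot {d e : ℕ} (f g : R[X]) (hg : g.natDegree ≤ e) (i j : Fin (e + d))
    (h : ¬ (i : ℕ) < e) : sylvester d e f g i j = (X ^ ((i : ℕ) - e) * g).coeff (j : ℕ) := by
  rw [_root_.sylvester, if_neg h, coeff_X_pow_mul']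
  rcases le_or_gt ((i : ℕ) - e) (j : ℕ) with hij | hij
  · rw [if_pos hij]
    rcases le_or_gt (j : ℕ) (i : ℕ) with hjd | hjd
    · rw [if_pos ⟨hij, hjd⟩]
    · rw [if_neg (by omega)]
      exact (coeff_eq_zero_of_natDegree_lt (by omega)).symm
  · rw [if_neg (by omega), if_neg (by omega)]

/-- decomposition of the `t`-Sylvester matrix -/
theorem syl_decomp (d e : ℕ) (f h g : R[X]) :
    sylvester d e (f.map (C : R →+* R[X])) (h.map (C : R →+* R[X]) + g.map (C : R →+* R[X]) * C X)
      = (sylvester d e f h).map (C : R →+* R[X])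
        + (X : R[X]) • (sylvester d e 0 g).map (C : R →+* R[X]) := by
  ext i j
  simp only [_root_.sylvester, Matrix.add_apply, Matrix.map_apply, Matrix.smul_apply, smul_eq_mul]
  split_ifs with h1 h2 h2
  · simp [coeff_map]
  · simp
  · rw [coeff_add, coeff_map, coeff_mul_C, coeff_map]
    ring
  · simp

variable {L : Type*} [Field L]

/-- coefficient matrix expressing `g`-rows in terms of rows of Sylvester matrix -/
def matV (d e : ℕ) (U V : ℕ → L[X]) : Matrix (Fin (e + d)) (Fin (e + d)) L := fun i j =>
  if (i : ℕ) < e then 0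
  else if (j : ℕ) < e then (U ((i : ℕ) - e)).coeff (j : ℕ)
  else (V ((i : ℕ) - e)).coeff ((j : ℕ) - e)

theorem trace_matV (d e : ℕ) (U V : ℕ → L[X]) :
    (matV (L := L) d e U V).trace = ∑ k ∈ range d, (V k).coeff k := by
  rw [Matrix.trace, Fin.sum_univ_add (f := fun i : Fin (e + d) => diag (matV d e U V) i)]
  have h1 : ∀ i : Fin e, Matrix.diag (matV (L := L) d e U V) (Fin.castAdd d i) = 0 := by
    intro i
    simp [Matrix.diag, matV, i.isLt]
  have h2 : ∀ i : Fin d,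
      Matrix.diag (matV (L := L) d e U V) (Fin.natAdd e i) = (V (i : ℕ)).coeff i := by
    intro i
    simp [Matrix.diag, matV]
  simp only [h1, h2, Finset.sum_const_zero, zero_add]
  rw [Fin.sum_univ_eq_sum_range (fun k => (V k).coeff k) d]

theorem sum_coeff_mul (p q : L[X]) (m : ℕ) (hp : p.natDegree < m) (j : ℕ) :
    ∑ i ∈ range m, p.coeff i * (X ^ i * q).coeff j = (p * q).coeff j := by
  conv_rhs => rw [p.as_sum_range' m hp]
  rw [Finset.sum_mul, finset_sum_coeff]
  refine Finset.sum_congr rfl fun i _ => ?_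
  rw [← smul_X_eq_monomial, smul_mul_assoc, coeff_smul, smul_eq_mul]

theorem matV_mul_syl (d e : ℕ) (f h g : L[X]) (U V : ℕ → L[X])
    (hf : f.natDegree ≤ d) (hh : h.natDegree ≤ e) (hg : g.natDegree ≤ e)
    (hU : ∀ k < d, (U k).natDegree < e) (hV : ∀ k < d, (V k).natDegree < d)
    (heq : ∀ k < d, U k * f + V k * h = X ^ k * g) :
    matV d e U V * sylvester d e f h = sylvester d e 0 g := by
  ext i j
  rw [Matrix.mul_apply]
  by_cases hi : (i : ℕ) < e
  · rw [syl_top 0 g (by simp) i j hi]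
    simp [matV, hi]
  · have hk : (i : ℕ) - e < d := by omega
    rw [syl_bot 0 g hg i j hi]
    rw [Fin.sum_univ_add (f := fun m : Fin (e + d) => matV d e U V i m * sylvester d e f h m j)]
    have e1 : ∀ m : Fin e,
        matV (L := L) d e U V i (Fin.castAdd d m) * sylvester d e f h (Fin.castAdd d m) j
          = (U ((i : ℕ) - e)).coeff (m : ℕ) * (X ^ (m : ℕ) * f).coeff (j : ℕ) := by
      intro m
      rw [syl_top f h hf _ j (by simpa using m.isLt), matV, if_neg hi,
        if_pos (by simpa using m.isLt)]
      simp
    have e2 : ∀ m : Fin d,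
        matV (L := L) d e U V i (Fin.natAdd e m) * sylvester d e f h (Fin.natAdd e m) j
          = (V ((i : ℕ) - e)).coeff (m : ℕ) * (X ^ (m : ℕ) * h).coeff (j : ℕ) := by
      intro m
      rw [syl_bot f h hh _ j (by simp), matV, if_neg hi, if_neg (by simp)]
      simp
    simp only [e1, e2]
    have t1 : ∑ x : Fin e, (U ((i : ℕ) - e)).coeff (x : ℕ) * (X ^ (x : ℕ) * f).coeff (j : ℕ)
        = ∑ m ∈ range e, (U ((i : ℕ) - e)).coeff m * (X ^ m * f).coeff (j : ℕ) :=
      Fin.sum_univ_eq_sum_range (fun m => (U ((i : ℕ) - e)).coeff m * (X ^ m * f).coeff (j : ℕ)) e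
    have t2 : ∑ x : Fin d, (V ((i : ℕ) - e)).coeff (x : ℕ) * (X ^ (x : ℕ) * h).coeff (j : ℕ)
        = ∑ m ∈ range d, (V ((i : ℕ) - e)).coeff m * (X ^ m * h).coeff (j : ℕ) :=
      Fin.sum_univ_eq_sum_range (fun m => (V ((i : ℕ) - e)).coeff m * (X ^ m * h).coeff (j : ℕ)) d
    rw [t1, t2]
    rw [sum_coeff_mul _ _ _ (hU _ hk), sum_coeff_mul _ _ _ (hV _ hk)]
    rw [← coeff_add, heq _ hk]

theorem euler {M : Type*} [Field M] (f g : M[X]) (n : ℕ) (hn : 3 ≤ n)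
    (hf : f.natDegree = n) (hsep : f.Separable) (hsplit : f.Splits)
    (hg : g.natDegree + 2 ≤ n) (U V : ℕ → M[X])
    (hV : ∀ k < n, (V k).natDegree < n)
    (heq : ∀ k < n, U k * f + V k * derivative f = X ^ k * g) :
    ∑ k ∈ range n, (V k).coeff k = 0 := by
  classical
  have hf0 : f ≠ 0 := fun h => by rw [h] at hf; simp at hf; omega
  set s := f.roots.toFinset with hs
  have hnodup : f.roots.Nodup := nodup_roots hsep
  have hcard : s.card = n := by
    rw [hs, Multiset.toFinset_card_of_nodup hnodup, ← hf,
      hsplit.natDegree_eq_card_roots]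
  have hinj : Set.InjOn id (s : Set M) := Set.injOn_id _
  have hroot : ∀ α ∈ s, f.eval α = 0 := fun α hα =>
    (mem_roots hf0).mp (Multiset.mem_toFinset.mp hα)
  obtain ⟨u, v, huv⟩ := id hsep
  have hfd : ∀ α ∈ s, (derivative f).eval α ≠ 0 := by
    intro α hα hzero
    have h1 := congrArg (Polynomial.eval α) huv
    simp [hroot α hα, hzero] at h1
  set a := f.leadingCoeff with ha
  have ha0 : a ≠ 0 := leadingCoeff_ne_zero.mpr hf0
  have hfN : f = C a * Lagrange.nodal s id := by
    have hprod : f = C f.leadingCoeff * (f.roots.map fun a => X - C a).prod :=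
      hsplit.eq_prod_roots
    rw [Lagrange.nodal_eq, Finset.prod_eq_multiset_prod]
    rw [hs, Multiset.toFinset_val, Multiset.dedup_eq_self.mpr hnodup]
    simpa using hprod
  set P : M → M := fun α => ∏ β ∈ s.erase α, (α - β) with hP
  have hfdP : ∀ α ∈ s, (derivative f).eval α = a * P α := by
    intro α hα
    rw [hfN, derivative_C_mul, eval_mul, eval_C]
    have h2 : Polynomial.eval α (derivative (Lagrange.nodal s id)) = P α := by
      have h3 := Lagrange.eval_nodal_derivative_eval_node_eq (s := s) (v := id) hα
      simp only [id_eq] at h3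
      rw [h3, Lagrange.eval_nodal]
      simp [hP]
    rw [h2]
  have hcoeffI : ∀ (r : M → M) (k : ℕ), (Lagrange.interpolate s id r).coeff k
      = ∑ α ∈ s, r α * (Lagrange.basis s id α).coeff k := by
    intro r k
    rw [Lagrange.interpolate_apply, finset_sum_coeff]
    exact Finset.sum_congr rfl fun α _ => by rw [coeff_C_mul]
  have hb : ∀ α ∈ s, (Lagrange.basis s id α).coeff (n - 1) = (P α)⁻¹ := by
    intro α hα
    have hnd := Lagrange.natDegree_basis hinj hα
    rw [hcard] at hnd
    rw [← hnd, coeff_natDegree, Lagrange.basis, leadingCoeff_prod, hP, ← Finset.prod_inv_distrib]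
    refine Finset.prod_congr rfl fun β hβ => ?_
    rw [Lagrange.basisDivisor, leadingCoeff_mul, leadingCoeff_C,
      (monic_X_sub_C (id β)).leadingCoeff, mul_one, id_eq, id_eq]
  have key : ∑ α ∈ s, g.eval α * ((derivative f).eval α)⁻¹ = 0 := by
    have h0 : g.coeff (n - 1) = 0 := coeff_eq_zero_of_natDegree_lt (by omega)
    have hgdeg : g.degree < (s.card : WithBot ℕ) := by
      rw [hcard]
      exact lt_of_le_of_lt degree_le_natDegree
        (by exact_mod_cast (by omega : g.natDegree < n))
    have hgi := Lagrange.eq_interpolate (f := g) hinj hgdeg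
    have h2 : g.coeff (n - 1) = ∑ α ∈ s, g.eval α * (P α)⁻¹ := by
      conv_lhs => rw [hgi]
      rw [hcoeffI]
      exact Finset.sum_congr rfl fun α hα => by rw [hb α hα, id_eq]
    calc ∑ α ∈ s, g.eval α * ((derivative f).eval α)⁻¹
        = ∑ α ∈ s, g.eval α * (a⁻¹ * (P α)⁻¹) :=
          Finset.sum_congr rfl fun α hα => by rw [hfdP α hα, mul_inv]
      _ = a⁻¹ * ∑ α ∈ s, g.eval α * (P α)⁻¹ := by
          rw [Finset.mul_sum]
          exact Finset.sum_congr rfl fun _ _ => by ring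
      _ = 0 := by rw [← h2, h0, mul_zero]
  have hVk : ∀ k, k < n → V k = Lagrange.interpolate s id
      (fun α => α ^ k * g.eval α * ((derivative f).eval α)⁻¹) := by
    intro k hk
    refine Lagrange.eq_interpolate_of_eval_eq _ hinj ?_ ?_
    · rw [hcard]
      exact lt_of_le_of_lt degree_le_natDegree (by exact_mod_cast hV k hk)
    · intro α hα
      have h1 := congrArg (Polynomial.eval α) (heq k hk)
      simp only [eval_add, eval_mul, eval_pow, eval_X, hroot α hα, mul_zero, zero_add] at h1
      rw [id_eq]
      field_simp [hfd α hα]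
      linear_combination h1
  calc ∑ k ∈ range n, (V k).coeff k
      = ∑ k ∈ range n, ∑ α ∈ s,
          (α ^ k * g.eval α * ((derivative f).eval α)⁻¹) * (Lagrange.basis s id α).coeff k := by
        refine Finset.sum_congr rfl fun k hk => ?_
        rw [hVk k (mem_range.mp hk), hcoeffI]
    _ = ∑ α ∈ s, (g.eval α * ((derivative f).eval α)⁻¹)
          * ∑ k ∈ range n, (Lagrange.basis s id α).coeff k * α ^ k := by
        rw [Finset.sum_comm]
        refine Finset.sum_congr rfl fun α hα => ?_
        rw [Finset.mul_sum]
        exact Finset.sum_congr rfl fun k hk => by ring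
    _ = ∑ α ∈ s, g.eval α * ((derivative f).eval α)⁻¹ := by
        refine Finset.sum_congr rfl fun α hα => ?_
        have hnd := Lagrange.natDegree_basis hinj hα
        have h4 : (Lagrange.basis s id α).eval α
            = ∑ k ∈ range n, (Lagrange.basis s id α).coeff k * α ^ k :=
          eval_eq_sum_range' (by rw [hnd, hcard]; omega) α
        have h5 := Lagrange.eval_basis_self hinj hα
        rw [id_eq] at h5
        rw [← h4, h5, mul_one]
    _ = 0 := key

theorem keyM {L : Type*} [Field L] (f g : L[X]) (n : ℕ) (hn : 3 ≤ n)
    (hf : f.natDegree = n) (hsep : f.Separable) (hg : g.natDegree + 2 ≤ n) :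
    ((sylvester n (n - 1) (f.map (C : L →+* L[X]))
        ((derivative f).map (C : L →+* L[X])
          + g.map (C : L →+* L[X]) * C X)).det).coeff 1 = 0 := by
  have hf0 : f ≠ 0 := fun h => by rw [h] at hf; simp at hf; omega
  set e := n - 1 with he
  obtain ⟨u, v, huv⟩ := id hsep
  set a := f.leadingCoeff with ha
  have ha0 : a ≠ 0 := leadingCoeff_ne_zero.mpr hf0
  have hfm : (f * C a⁻¹).Monic := monic_mul_leadingCoeff_inv hf0
  set U : ℕ → L[X] := fun k =>
    X ^ k * g * u + C a⁻¹ * (X ^ k * g * v /ₘ (f * C a⁻¹)) * derivative f with hUdef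
  set V : ℕ → L[X] := fun k => X ^ k * g * v %ₘ (f * C a⁻¹) with hVdef
  have heq : ∀ k, U k * f + V k * derivative f = X ^ k * g := by
    intro k
    have h1 : X ^ k * g * v %ₘ (f * C a⁻¹)
        + (f * C a⁻¹) * (X ^ k * g * v /ₘ (f * C a⁻¹)) = X ^ k * g * v :=
      modByMonic_add_div _ _
    simp only [hUdef, hVdef]
    linear_combination derivative f * h1 + (X ^ k * g) * huv
  have hdegf : (f * C a⁻¹).degree = (n : WithBot ℕ) := by
    rw [degree_mul, degree_C (inv_ne_zero ha0), add_zero, degree_eq_natDegree hf0, hf]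
  have hVdeg : ∀ k < n, (V k).natDegree < n := by
    intro k _
    by_cases h0 : V k = 0
    · rw [h0]; simpa using by omega
    have := degree_modByMonic_lt (X ^ k * g * v) hfm
    rw [hdegf] at this
    have h2 : (V k).degree < (n : WithBot ℕ) := this
    rw [natDegree_lt_iff_degree_lt h0]
    exact_mod_cast h2
  have hUdeg : ∀ k < n, (U k).natDegree < e := by
    intro k hk
    by_cases h0 : U k = 0
    · rw [h0]; simpa using by omega
    have hmul : U k * f = X ^ k * g - V k * derivative f := by linear_combination heq k
    have nd0 : (U k * f).natDegree = (U k).natDegree + n := by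
      rw [natDegree_mul h0 hf0, hf]
    have nd1 : (X ^ k * g).natDegree ≤ k + g.natDegree :=
      le_trans (natDegree_mul_le) (by simp [natDegree_X_pow])
    have nd2 : (V k * derivative f).natDegree ≤ (n - 1) + (n - 1) :=
      le_trans (natDegree_mul_le)
        (add_le_add (by have := hVdeg k hk; omega)
          (le_trans (natDegree_derivative_le f) (by omega)))
    have nd3 : (X ^ k * g - V k * derivative f).natDegree ≤ 2 * n - 2 := by
      refine le_trans (natDegree_sub_le _ _) ?_
      have : k + g.natDegree ≤ 2 * n - 3 := by omega
      simp only [max_le_iff]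
      omega
    rw [hmul] at nd0
    omega
  have hB : matV n e U V * sylvester n e f (derivative f) = sylvester n e 0 g :=
    matV_mul_syl n e f (derivative f) g U V (le_of_eq hf)
      (le_trans (natDegree_derivative_le f) (by omega)) (by omega)
      hUdeg hVdeg (fun k _ => heq k)
  have hS : sylvester n e (f.map (C : L →+* L[X]))
        ((derivative f).map (C : L →+* L[X]) + g.map (C : L →+* L[X]) * C X)
      = (1 + (X : L[X]) • (matV n e U V).map (C : L →+* L[X]))
          * (sylvester n e f (derivative f)).map (C : L →+* L[X]) := by
    rw [syl_decomp, Matrix.add_mul, Matrix.one_mul, Matrix.smul_mul, ← Matrix.map_mul, hB]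
  have hdet : ((sylvester n e f (derivative f)).map (⇑(C : L →+* L[X]))).det
      = C ((sylvester n e f (derivative f)).det) := by
    rw [← RingHom.mapMatrix_apply, ← RingHom.map_det]
  rw [hS, Matrix.det_mul, hdet, coeff_mul_C,
    Matrix.coeff_det_one_add_X_smul_one, trace_matV]
  have hsum : ∑ k ∈ range n, (V k).coeff k = 0 := by
    have hinj : Function.Injective (algebraMap L f.SplittingField) :=
      (algebraMap L f.SplittingField).injective
    have hz := euler (f.map (algebraMap L f.SplittingField))
      (g.map (algebraMap L f.SplittingField)) n hn
      (by rw [natDegree_map]; exact hf) (hsep.map)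
      (SplittingField.splits f)
      (by rw [natDegree_map]; exact hg)
      (fun k => (U k).map (algebraMap L f.SplittingField))
      (fun k => (V k).map (algebraMap L f.SplittingField))
      (fun k hk => by rw [natDegree_map]; exact hVdeg k hk)
      (fun k hk => by
        have h3 := congrArg (Polynomial.map (algebraMap L f.SplittingField)) (heq k)
        simpa only [Polynomial.map_add, Polynomial.map_mul, Polynomial.map_pow, map_X,
          derivative_map] using h3)
    apply hinj
    rw [map_sum, map_zero]
    simpa only [coeff_map] using hz
  rw [hsum, zero_mul]

theorem T_map {R S : Type*} [CommRing R] [CommRing S] (ψ : R →+* S) (d e : ℕ) (p q r : R[X]) :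
    ((sylvester d e ((p.map ψ).map (C : S →+* S[X]))
        ((q.map ψ).map (C : S →+* S[X]) + (r.map ψ).map (C : S →+* S[X]) * C X)).det).coeff 1
      = ψ (((sylvester d e (p.map (C : R →+* R[X]))
        (q.map (C : R →+* R[X]) + r.map (C : R →+* R[X]) * C X)).det).coeff 1) := by
  have hmat : sylvester d e ((p.map ψ).map (C : S →+* S[X]))
        ((q.map ψ).map (C : S →+* S[X]) + (r.map ψ).map (C : S →+* S[X]) * C X)
      = (sylvester d e (p.map (C : R →+* R[X]))
          (q.map (C : R →+* R[X]) + r.map (C : R →+* R[X]) * C X)).map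
            (Polynomial.mapRingHom ψ) := by
    ext i j
    simp only [_root_.sylvester, Matrix.map_apply]
    split_ifs
    · simp [coeff_map]
    · simp
    · simp [coeff_map, coeff_add, coeff_mul_C, Polynomial.map_add, Polynomial.map_mul]
    · simp
  rw [hmat, ← RingHom.mapMatrix_apply, ← RingHom.map_det, coe_mapRingHom, coeff_map]

theorem sep_perturb {K : Type*} [Field K] (f : Polynomial K) (hder : derivative f ≠ 0)
    (hn : 1 ≤ f.natDegree) :
    ((f.map (((algebraMap (Polynomial K) (FractionRing (Polynomial K))).comp
          (C : K →+* Polynomial K)))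
        + Polynomial.C (algebraMap (Polynomial K) (FractionRing (Polynomial K)) X))).Separable
    := by
  classical
  set Lp := FractionRing (Polynomial K)
  set ψ : Polynomial K →+* Lp := algebraMap (Polynomial K) Lp with hψ
  set ι : K →+* Lp := ψ.comp (C : K →+* Polynomial K) with hι
  have hψinj : Function.Injective ψ := IsFractionRing.injective (Polynomial K) Lp
  have hιinj : Function.Injective ι := ι.injective
  set F : Lp[X] := f.map ι + Polynomial.C (ψ X) with hFdef
  have hderF : derivative F = (derivative f).map ι := by
    rw [hFdef, derivative_add, derivative_C, add_zero, derivative_map]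
  have hderF0 : derivative F ≠ 0 := by
    rw [hderF]
    exact (Polynomial.map_ne_zero_iff hιinj).mpr hder
  rw [Polynomial.Separable]
  by_contra hcop
  set d : Lp[X] := EuclideanDomain.gcd F (derivative F) with hd
  have hgcd : ¬ IsUnit d := fun h => hcop (EuclideanDomain.gcd_isUnit_iff.mp h)
  have hd1 : d ∣ F := EuclideanDomain.gcd_dvd_left _ _
  have hd2 : d ∣ derivative F := EuclideanDomain.gcd_dvd_right _ _
  have hd0 : d ≠ 0 := by
    intro h
    rw [h] at hd2
    exact hderF0 (zero_dvd_iff.mp hd2)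
  set A := AlgebraicClosure Lp
  set j : Lp →+* A := algebraMap Lp A with hj
  have hjinj : Function.Injective j := j.injective
  have hdegd : (d.map j).degree ≠ 0 := by
    rw [degree_map_eq_of_injective hjinj]
    intro h
    exact hgcd (isUnit_iff_degree_eq_zero.mpr h)
  obtain ⟨θ, hθ⟩ := IsAlgClosed.exists_root (d.map j) hdegd
  set κ : K →+* A := j.comp ι with hκ
  have hFj : eval θ (F.map j) = 0 := by
    refine eval_eq_zero_of_dvd_of_eval_eq_zero (Polynomial.map_dvd j hd1) hθ
  have hF'j : eval θ ((derivative f).map κ) = 0 := by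
    have := eval_eq_zero_of_dvd_of_eval_eq_zero (Polynomial.map_dvd j hd2) hθ
    rwa [hderF, Polynomial.map_map] at this
  letI : Algebra K A := κ.toAlgebra
  have halgmap : algebraMap K A = κ := rfl
  have hθalg : IsAlgebraic K θ := ⟨derivative f, hder, by
    rw [aeval_def, halgmap, eval₂_eq_eval_map]
    exact hF'j⟩
  have hθint : IsIntegral K θ := isAlgebraic_iff_isIntegral.mp hθalg
  have hfθ : IsIntegral K (Polynomial.aeval θ f) :=
    IsIntegral.of_mem_of_fg _ hθint.fg_adjoin_singleton _ (aeval_mem_adjoin_singleton K θ)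
  have h2 : j (ψ X) = - Polynomial.aeval θ f := by
    have : eval θ (f.map κ) + j (ψ X) = 0 := by
      rw [hFdef] at hFj
      rw [Polynomial.map_add, Polynomial.map_map, Polynomial.map_C] at hFj
      simpa using hFj
    rw [aeval_def, halgmap, eval₂_eq_eval_map]
    linear_combination this
  have hsint : IsIntegral K (j (ψ X)) := by
    rw [h2]
    exact hfθ.neg
  obtain ⟨p, hpmonic, hproot⟩ := hsint
  rw [halgmap] at hproot
  have h3 : j (eval₂ ι (ψ X) p) = 0 := by
    rw [hom_eval₂]
    exact hproot
  have h4 : eval₂ ι (ψ X) p = 0 := hjinj (by rw [h3, map_zero])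
  have h5 : ψ (eval₂ C X p) = 0 := by
    rw [hom_eval₂]
    exact h4
  have h6 : eval₂ C X p = 0 := hψinj (by rw [h5, map_zero])
  rw [eval₂_C_X] at h6
  exact hpmonic.ne_zero h6

end Stmt19aux

theorem stmt19 (K : Type*) [Field K] (f g : Polynomial K)
    (hf : 3 ≤ f.natDegree) (hg : g.natDegree + 2 ≤ f.natDegree) :
    Polynomial.eval 0 (Polynomial.derivative
      (res f.natDegree (f.natDegree - 1)
        (f.map (Polynomial.C : K →+* Polynomial K))
        ((Polynomial.derivative f).map (Polynomial.C : K →+* Polynomial K)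
          + g.map (Polynomial.C : K →+* Polynomial K)
            * Polynomial.C Polynomial.X))) = 0 := by
  classical
  open Polynomial Matrix Finset Stmt19aux in
  set n := f.natDegree with hn
  rw [res, ← Polynomial.coeff_zero_eq_eval_zero, Polynomial.coeff_derivative]
  simp only [zero_add, Nat.cast_zero, Nat.cast_one, mul_one]
  by_cases hder : Polynomial.derivative f = 0
  · rw [hder]
    have hmat : sylvester n (n - 1) (f.map (Polynomial.C : K →+* Polynomial K))
          ((0 : Polynomial K).map Polynomial.C
            + g.map Polynomial.C * Polynomial.C Polynomial.X)
        = Matrix.of fun (i j : Fin ((n - 1) + n)) =>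
            (if (i : ℕ) < n - 1 then (1 : Polynomial K) else Polynomial.X) *
              sylvester n (n - 1) (f.map (Polynomial.C : K →+* Polynomial K))
                (g.map Polynomial.C) i j := by
      funext i j
      simp only [_root_.sylvester, Matrix.of_apply]
      split_ifs
      · rw [one_mul]
      · rw [one_mul]
      · simp only [Polynomial.map_zero, zero_add, Polynomial.coeff_mul_C, Polynomial.coeff_map]
        ring
      · simp
    rw [hmat, Matrix.det_mul_column]
    have hprod : (∏ i : Fin ((n - 1) + n),
        if (i : ℕ) < n - 1 then (1 : Polynomial K) else Polynomial.X) = Polynomial.X ^ n := by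
      rw [Fin.prod_univ_add
        (f := fun i : Fin ((n - 1) + n) =>
          if (i : ℕ) < n - 1 then (1 : Polynomial K) else Polynomial.X)]
      have e1 : ∀ i : Fin (n - 1),
          (if ((Fin.castAdd n i : Fin ((n - 1) + n)) : ℕ) < n - 1 then (1 : Polynomial K)
            else Polynomial.X) = 1 := fun i => if_pos (by simpa using i.isLt)
      have e2 : ∀ i : Fin n,
          (if ((Fin.natAdd (n - 1) i : Fin ((n - 1) + n)) : ℕ) < n - 1 then (1 : Polynomial K)
            else Polynomial.X) = Polynomial.X := fun i => if_neg (by simp)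
      simp only [e1, e2, Finset.prod_const_one, one_mul, Finset.prod_const, Finset.card_univ,
        Fintype.card_fin]
    rw [hprod, Stmt19aux.coeff_X_pow_mul', if_neg (by omega)]
  · set Lp := FractionRing (Polynomial K) with hLp
    set ψ : Polynomial K →+* Lp := algebraMap (Polynomial K) Lp with hψ
    set ι : K →+* Lp := ψ.comp (Polynomial.C : K →+* Polynomial K) with hι
    have hψinj : Function.Injective ψ := IsFractionRing.injective (Polynomial K) Lp
    have hιinj : Function.Injective ι := ι.injective
    set F0 : Polynomial (Polynomial K) :=
      f.map (Polynomial.C : K →+* Polynomial K) + Polynomial.C Polynomial.X with hF0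
    set G0 : Polynomial (Polynomial K) := g.map (Polynomial.C : K →+* Polynomial K) with hG0
    set F : Polynomial Lp := F0.map ψ with hF
    have hFeq : F = f.map ι + Polynomial.C (ψ Polynomial.X) := by
      rw [hF, hF0, Polynomial.map_add, Polynomial.map_map, Polynomial.map_C]
    have hsep : F.Separable := by
      rw [hFeq]
      exact Stmt19aux.sep_perturb f hder (by omega)
    have hmapdeg : (f.map ι).natDegree = n := Polynomial.natDegree_map_eq_of_injective hιinj f
    have hdegF : F.natDegree = n := by
      rw [hFeq, Polynomial.natDegree_add_eq_left_of_natDegree_lt, hmapdeg]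
      rw [hmapdeg, Polynomial.natDegree_C]
      omega
    have hkey := Stmt19aux.keyM F (g.map ι) n (by omega) hdegF hsep
      (by rw [Polynomial.natDegree_map_eq_of_injective hιinj]; exact hg)
    have hd0 : (Polynomial.derivative F0).map ψ = Polynomial.derivative F :=
      (Polynomial.derivative_map F0 ψ).symm
    have hG : G0.map ψ = g.map ι := by rw [hG0, Polynomial.map_map]
    have hT := Stmt19aux.T_map ψ n (n - 1) F0 (Polynomial.derivative F0) G0
    rw [hd0, hG, ← hF] at hT
    have hTR : ((sylvester n (n - 1)
        (F0.map (Polynomial.C : Polynomial K →+* Polynomial (Polynomial K)))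
        ((Polynomial.derivative F0).map Polynomial.C
          + G0.map Polynomial.C * Polynomial.C Polynomial.X)).det).coeff 1 = 0 := by
      apply hψinj
      rw [map_zero, ← hT]
      exact hkey
    have hev := Stmt19aux.T_map (Polynomial.evalRingHom (0 : K)) n (n - 1) F0
      (Polynomial.derivative F0) G0
    have hcomp : (Polynomial.evalRingHom (0 : K)).comp (Polynomial.C : K →+* Polynomial K)
        = RingHom.id K := by
      ext x
      simp
    have hevF : F0.map (Polynomial.evalRingHom (0 : K)) = f := by
      rw [hF0, Polynomial.map_add, Polynomial.map_map, Polynomial.map_C, hcomp,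
        Polynomial.map_id]
      simp
    have hevF' : (Polynomial.derivative F0).map (Polynomial.evalRingHom (0 : K))
        = Polynomial.derivative f := by
      rw [← Polynomial.derivative_map, hevF]
    have hevG : G0.map (Polynomial.evalRingHom (0 : K)) = g := by
      rw [hG0, Polynomial.map_map, hcomp, Polynomial.map_id]
    rw [hevF, hevF', hevG] at hev
    rw [hev, hTR, map_zero]
end
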